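/- arXiv:1801.04357 — 8 statements merged into one kernel-verified Lean document; each statement's English description precedes it below -/
import Mathlib

section
/- Let b : ℕ → ℝ satisfy b j ≥ 0 for all j, let c > 0, and let q : ℕ → ℝ be defined by q 0 = 0 and q (i+1) = max(q i + b i − c, 0). Then for every i ∈ ℕ, the under-utilization condition c − b i > q i holds if and only if for every natural number k with 1 ≤ k ≤ i+1 one has ∑_{j=i+1−k}^{i} b j < k·c. -/
/-- Key combinatorial step: shifting the backward-sum conditions by one index. -/
lemma underutil_step (b : ℕ → ℝ) (c : ℝ) (i : ℕ) (x : ℝ) :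
    ((0 < c - b i + x) ∧ ∀ k : ℕ, 1 ≤ k → k ≤ i →
        ∑ j ∈ Finset.Icc (i - k) (i - 1), b j < (k : ℝ) * c + (c - b i + x))
    ↔ ∀ k : ℕ, 1 ≤ k → k ≤ i + 1 →
        ∑ j ∈ Finset.Icc (i + 1 - k) i, b j < (k : ℝ) * c + x := by
  constructor
  · rintro ⟨h0, hall⟩ k hk1 hk2
    rcases k with _ | k
    · omega
    rcases Nat.eq_zero_or_pos k with rfl | hk
    · simp only [Nat.add_sub_cancel, Finset.Icc_self, Finset.sum_singleton]
      push_cast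
      linarith
    · have hi : 1 ≤ i := by omega
      obtain ⟨m, rfl⟩ : ∃ m, i = m + 1 := ⟨i - 1, by omega⟩
      have hidx : m + 1 + 1 - (k + 1) = m + 1 - k := by omega
      rw [hidx, Finset.sum_Icc_succ_top (show m + 1 - k ≤ m + 1 by omega)]
      have h := hall k hk (by omega)
      simp only [Nat.add_sub_cancel] at h
      push_cast
      linarith
  · intro hall
    have h1 := hall 1 le_rfl (by omega)
    simp only [Nat.add_sub_cancel, Finset.Icc_self, Finset.sum_singleton] at h1
    have h0 : 0 < c - b i + x := by push_cast at h1; linarith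
    refine ⟨h0, fun k hk1 hk2 => ?_⟩
    obtain ⟨m, rfl⟩ : ∃ m, i = m + 1 := ⟨i - 1, by omega⟩
    have h := hall (k + 1) (by omega) (by omega)
    have hidx : m + 1 + 1 - (k + 1) = m + 1 - k := by omega
    rw [hidx, Finset.sum_Icc_succ_top (show m + 1 - k ≤ m + 1 by omega)] at h
    simp only [Nat.add_sub_cancel]
    push_cast at h ⊢
    linarith

/-- Representation of the Lindley recursion: `q i < x` iff `x` is positive and all
backward partial sums are suitably bounded. -/
lemma lindley_lt (b : ℕ → ℝ) (c : ℝ) (q : ℕ → ℝ) (hq0 : q 0 = 0)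
    (hq : ∀ i, q (i + 1) = max (q i + b i - c) 0) :
    ∀ (i : ℕ) (x : ℝ), q i < x ↔ (0 < x ∧ ∀ k : ℕ, 1 ≤ k → k ≤ i →
      ∑ j ∈ Finset.Icc (i - k) (i - 1), b j < (k : ℝ) * c + x) := by
  intro i
  induction i with
  | zero =>
      intro x
      constructor
      · intro h
        exact ⟨by rw [hq0] at h; exact h, fun k hk1 hk2 => by omega⟩
      · intro ⟨h, _⟩
        rw [hq0]; exact h
  | succ i ih =>
      intro x
      rw [hq i, max_lt_iff]
      have h1 : q i + b i - c < x ↔ q i < c - b i + x := by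
        constructor <;> intro <;> linarith
      rw [h1, ih (c - b i + x)]
      constructor
      · rintro ⟨⟨hpos, hall⟩, hx⟩
        refine ⟨hx, ?_⟩
        have := (underutil_step b c i x).mp ⟨hpos, hall⟩
        simpa only [Nat.add_sub_cancel] using this
      · rintro ⟨hx, hall⟩
        have hall' : ∀ k : ℕ, 1 ≤ k → k ≤ i + 1 →
            ∑ j ∈ Finset.Icc (i + 1 - k) i, b j < (k : ℝ) * c + x := by
          simpa only [Nat.add_sub_cancel] using hall
        obtain ⟨h0, h⟩ := (underutil_step b c i x).mpr hall'
        exact ⟨⟨h0, h⟩, hx⟩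

/-- Lemma 1 of the paper: with runtimes `b`, transmission interval `c`, and queueing
delays `q` given by the Lindley recursion, the under-utilization condition
`c - b i > q i` holds iff the `i+1` backward partial-sum conditions hold. -/
theorem underutilization_iff_backward_sums
    (b : ℕ → ℝ) (hb : ∀ j, 0 ≤ b j) (c : ℝ) (hc : 0 < c)
    (q : ℕ → ℝ) (hq0 : q 0 = 0)
    (hq : ∀ i, q (i + 1) = max (q i + b i - c) 0) :
    ∀ i : ℕ, (c - b i > q i ↔
      ∀ k : ℕ, 1 ≤ k → k ≤ i + 1 →
        ∑ j ∈ Finset.Icc (i + 1 - k) i, b j < (k : ℝ) * c) := by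
  intro i
  have hx : c - b i = c - b i + 0 := by ring
  constructor
  · intro h
    have h' : q i < c - b i + 0 := by rw [← hx]; exact h
    obtain ⟨h0, hall⟩ := (lindley_lt b c q hq0 hq i (c - b i + 0)).mp h'
    have := (underutil_step b c i 0).mp ⟨by linarith, by simpa using hall⟩
    intro k hk1 hk2
    have := this k hk1 hk2
    linarith
  · intro hall
    have hall' : ∀ k : ℕ, 1 ≤ k → k ≤ i + 1 →
        ∑ j ∈ Finset.Icc (i + 1 - k) i, b j < (k : ℝ) * c + 0 := by
      intro k hk1 hk2; have := hall k hk1 hk2; linarith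
    obtain ⟨h0, h⟩ := (underutil_step b c i 0).mpr hall'
    have : q i < c - b i + 0 := (lindley_lt b c q hq0 hq i (c - b i + 0)).mpr
      ⟨by linarith, by simpa using h⟩
    linarith
end

section
/- Let b : ℕ → ℝ satisfy b j ≥ 0 for all j, let c > 0, and let q : ℕ → ℝ be defined by q 0 = 0 and q (i+1) = max(q i + b i − c, 0). If c − b i > q i for some i ∈ ℕ, then for every natural number k with 1 ≤ k ≤ i+1 one has k·c − ∑_{j=i+1−k}^{i} b j > q (i+1−k). -/
/-- The necessity induction claim in Appendix B of the paper: if the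
under-utilization condition `c - b i > q i` holds, then for every `k` with
`1 ≤ k ≤ i+1`, `k·c` minus the sum of the last `k` runtimes strictly exceeds the
queueing delay `q (i+1-k)`. -/
theorem necessity_induction
    (b : ℕ → ℝ) (hb : ∀ j, 0 ≤ b j) (c : ℝ) (hc : 0 < c)
    (q : ℕ → ℝ) (hq0 : q 0 = 0)
    (hq : ∀ i, q (i + 1) = max (q i + b i - c) 0)
    (i : ℕ) (h : c - b i > q i) :
    ∀ k : ℕ, 1 ≤ k → k ≤ i + 1 →
      (k : ℝ) * c - ∑ j ∈ Finset.Icc (i + 1 - k) i, b j > q (i + 1 - k) := by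
  intro k
  induction k with
  | zero => intro h1; omega
  | succ k ih =>
    intro _ hk
    rcases Nat.eq_zero_or_pos k with rfl | hk1
    · simpa using h
    · have hki : k ≤ i := by omega
      have ihk := ih hk1 (by omega)
      have hidx : i + 1 - k = (i - k) + 1 := by omega
      have hq' : q (i + 1 - k) ≥ q (i - k) + b (i - k) - c := by
        rw [hidx, hq]; exact le_max_left _ _
      have hsum : ∑ j ∈ Finset.Icc (i + 1 - (k + 1)) i, b j
          = b (i - k) + ∑ j ∈ Finset.Icc (i + 1 - k) i, b j := by
        have e : i + 1 - (k + 1) = i - k := by omega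
        have hins : Finset.Icc (i - k) i = insert (i - k) (Finset.Icc (i - k + 1) i) := by
          ext x; simp only [Finset.mem_Icc, Finset.mem_insert]; omega
        rw [e, hidx, hins, Finset.sum_insert (by simp)]
      have e : i + 1 - (k + 1) = i - k := by omega
      rw [e] at hsum
      rw [e, hsum]
      push_cast
      linarith
end

section
/- Let b : ℕ → ℝ satisfy b j ≥ 0 for all j, let c > 0, and let q : ℕ → ℝ be defined by q 0 = 0 and q (i+1) = max(q i + b i − c, 0). Fix i ∈ ℕ and suppose that for every natural number k with 1 ≤ k ≤ i+1 one has ∑_{j=i+1−k}^{i} b j < k·c. Then for every natural number l with 0 ≤ l ≤ i one has (i+1−l)·c − ∑_{j=l}^{i} b j > q l; in particular (taking l = i), c − b i > q i. -/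
/-!
Write `a j = c - b j`, so that `(i + 1 - l) c - ∑_{j=l}^{i} b j` is the tail sum
`∑_{j=l}^{i} a j` and the queue evolves by `q (l + 1) = max (q l - a l) 0`.
The hypothesis says that every tail sum is positive. Induct on `l`: the bound holds
at `l = 0` because `q 0 = 0`. Going from `l` to `l + 1` subtracts `a l` from both
`q l` and the tail sum, so the first argument of the `max` stays below the next tail
sum, and the second argument `0` is below it by positivity.
-/

open Finset

theorem lindley_lt_sum_Ico {α : Type*} [AddCommGroup α] [LinearOrder α]
    [IsOrderedAddMonoid α] (a q : ℕ → α) (m : ℕ) (hq0 : q 0 = 0)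
    (hq : ∀ l, q (l + 1) = max (q l - a l) 0)
    (hpos : ∀ l < m, 0 < ∑ j ∈ Ico l m, a j) :
    ∀ l < m, q l < ∑ j ∈ Ico l m, a j := by
  intro l
  induction l with
  | zero => simpa [hq0] using hpos 0
  | succ l ih =>
    intro hlm
    have htail : ∑ j ∈ Ico l m, a j = a l + ∑ j ∈ Ico (l + 1) m, a j :=
      sum_eq_sum_Ico_succ_bot (by omega) a
    rw [hq, max_lt_iff]
    refine ⟨?_, hpos (l + 1) hlm⟩
    have := ih (by omega)
    rw [htail] at this
    rwa [sub_lt_iff_lt_add']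

theorem sum_Ico_const_sub_eq (b : ℕ → ℝ) (c : ℝ) (l i : ℕ) :
    ∑ j ∈ Ico l (i + 1), (c - b j) = ((i + 1 - l : ℕ) : ℝ) * c - ∑ j ∈ Icc l i, b j := by
  rw [sum_sub_distrib, sum_const, Nat.card_Ico, nsmul_eq_mul, Ico_add_one_right_eq_Icc]

theorem sufficiency_induction_general
    (b : ℕ → ℝ) (c : ℝ)
    (q : ℕ → ℝ) (hq0 : q 0 = 0)
    (hq : ∀ i, q (i + 1) = max (q i + b i - c) 0)
    (i : ℕ)
    (h : ∀ k : ℕ, 1 ≤ k → k ≤ i + 1 →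
      ∑ j ∈ Finset.Icc (i + 1 - k) i, b j < (k : ℝ) * c) :
    (∀ l : ℕ, l ≤ i →
      ((i + 1 - l : ℕ) : ℝ) * c - ∑ j ∈ Finset.Icc l i, b j > q l)
    ∧ c - b i > q i := by
  have hq' : ∀ l, q (l + 1) = max (q l - (c - b l)) 0 := fun l => by
    rw [hq, sub_sub_eq_add_sub]
  have hpos : ∀ l < i + 1, 0 < ∑ j ∈ Ico l (i + 1), (c - b j) := fun l hl => by
    have hk := h (i + 1 - l) (by omega) (by omega)
    rw [Nat.sub_sub_self hl.le] at hk
    rw [sum_Ico_const_sub_eq]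
    linarith
  have key : ∀ l ≤ i, q l < ((i + 1 - l : ℕ) : ℝ) * c - ∑ j ∈ Icc l i, b j := fun l hl => by
    rw [← sum_Ico_const_sub_eq]
    exact lindley_lt_sum_Ico _ q (i + 1) hq0 hq' hpos l (by omega)
  refine ⟨key, ?_⟩
  simpa using key i le_rfl

/-- The sufficiency induction claim in Appendix B of the paper: if all `i+1`
backward partial-sum conditions hold, then for every `l ≤ i` the quantity
`(i+1-l)·c` minus the sum of runtimes from `l` to `i` strictly exceeds the
queueing delay `q l`; in particular (`l = i`), `c - b i > q i`. -/
theorem sufficiency_induction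
    (b : ℕ → ℝ) (hb : ∀ j, 0 ≤ b j) (c : ℝ) (hc : 0 < c)
    (q : ℕ → ℝ) (hq0 : q 0 = 0)
    (hq : ∀ i, q (i + 1) = max (q i + b i - c) 0)
    (i : ℕ)
    (h : ∀ k : ℕ, 1 ≤ k → k ≤ i + 1 →
      ∑ j ∈ Finset.Icc (i + 1 - k) i, b j < (k : ℝ) * c) :
    (∀ l : ℕ, l ≤ i →
      ((i + 1 - l : ℕ) : ℝ) * c - ∑ j ∈ Finset.Icc l i, b j > q l)
    ∧ c - b i > q i :=
  sufficiency_induction_general b c q hq0 hq i h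
end

section
/- For every a ∈ ℝ, every μ > 0, and every r with 0 ≤ r < 1/μ, ∫_{a}^{∞} μ·exp(−μ(t−a))·min(r, max(0, a + 1/μ − t)) dt = r + (exp(−1) − exp(μ·r − 1))/μ. -/
open MeasureTheory Real

/-!
For `r ≥ 0` one has `min r y⁺ = y⁺ - (y - r)⁺`, so with `c = a + 1/μ` and `T` the shifted
exponential runtime the integral is `E[(c - T)⁺] - E[(c - r - T)⁺]`. For `x ≥ a`,
`E[(x - T)⁺] = ∫_a^x μ e^{-μ(t-a)} (x - t) dt = x - a - (1 - e^{-μ(x-a)})/μ`; both `c` and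
`c - r` are `≥ a` because `r < 1/μ`, and the two values are `e⁻¹/μ` and `e^{μr-1}/μ - r`.
-/

theorem min_max_zero_eq_sub {α : Type*} [AddCommGroup α] [LinearOrder α] [IsOrderedAddMonoid α]
    {r : α} (hr : 0 ≤ r) (y : α) : min r (max 0 y) = max 0 y - max 0 (y - r) := by
  grind

section ShiftedExponential

variable (a : ℝ) {μ : ℝ}

theorem hasDerivAt_exp_mul_sub_add (hμ : μ ≠ 0) (x t : ℝ) :
    HasDerivAt (fun t => exp (-μ * (t - a)) * (t - x + 1 / μ))
      (μ * exp (-μ * (t - a)) * (x - t)) t := by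
  have hexp : HasDerivAt (fun t => exp (-μ * (t - a))) (exp (-μ * (t - a)) * -μ) t := by
    simpa using (((hasDerivAt_id t).sub_const a).const_mul (-μ)).exp
  refine (hexp.mul (((hasDerivAt_id' t).sub_const x).add_const (1 / μ))).congr_deriv ?_
  field_simp
  ring

theorem integral_exp_mul_sub (hμ : μ ≠ 0) (x : ℝ) :
    ∫ t in a..x, μ * exp (-μ * (t - a)) * (x - t) = x - a - (1 - exp (-μ * (x - a))) / μ := by
  have hcont : Continuous fun t => μ * exp (-μ * (t - a)) * (x - t) := by fun_prop
  rw [intervalIntegral.integral_eq_sub_of_hasDerivAt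
    (fun t _ => hasDerivAt_exp_mul_sub_add a hμ x t) (hcont.intervalIntegrable _ _)]
  simp only [sub_self, mul_zero, exp_zero, one_mul]
  field_simp
  ring

theorem exp_mul_max_zero_sub_eq_zero_of_mem_sdiff {x : ℝ} :
    ∀ t ∈ Set.Ioi a \ Set.Ioc a x, μ * exp (-μ * (t - a)) * max 0 (x - t) = 0 := by
  rintro t ⟨hat, htx⟩
  have hxt : x < t := not_le.mp fun h => htx ⟨hat, h⟩
  rw [max_eq_left (by linarith), mul_zero]

theorem integrableOn_Ioi_exp_mul_max_zero_sub (x : ℝ) :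
    IntegrableOn (fun t => μ * exp (-μ * (t - a)) * max 0 (x - t)) (Set.Ioi a) := by
  have hcont : Continuous fun t => μ * exp (-μ * (t - a)) * max 0 (x - t) := by fun_prop
  exact (hcont.integrableOn_Icc.mono_set Set.Ioc_subset_Icc_self).of_forall_sdiff_eq_zero
    measurableSet_Ioi (exp_mul_max_zero_sub_eq_zero_of_mem_sdiff a)

theorem integral_Ioi_exp_mul_max_zero_sub (hμ : μ ≠ 0) {x : ℝ} (hax : a ≤ x) :
    ∫ t in Set.Ioi a, μ * exp (-μ * (t - a)) * max 0 (x - t)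
      = x - a - (1 - exp (-μ * (x - a))) / μ := by
  rw [setIntegral_eq_of_subset_of_forall_sdiff_eq_zero measurableSet_Ioi Set.Ioc_subset_Ioi_self
      (exp_mul_max_zero_sub_eq_zero_of_mem_sdiff a), ← intervalIntegral.integral_of_le hax,
    ← integral_exp_mul_sub a hμ x]
  refine intervalIntegral.integral_congr fun t ht => ?_
  rw [Set.uIcc_of_le hax] at ht
  simp only [max_eq_right (sub_nonneg.mpr ht.2)]

end ShiftedExponential

/-- Equation (31) in Appendix D of the paper: the expected worst-case
per-packet under-utilization of a helper with shifted-exponential runtimes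
(shift `a`, rate `μ`) and round-trip time `r < 1/μ` equals
`r + (e⁻¹ − e^{μr−1})/μ`. -/
theorem expected_underutilization_small_rtt
    (a : ℝ) (μ : ℝ) (hμ : 0 < μ) (r : ℝ) (hr0 : 0 ≤ r) (hr : r < 1 / μ) :
    ∫ t in Set.Ioi a, μ * Real.exp (-μ * (t - a)) * min r (max 0 (a + 1 / μ - t))
      = r + (Real.exp (-1) - Real.exp (μ * r - 1)) / μ := by
  have hc : a ≤ a + 1 / μ := by linarith [one_div_pos.mpr hμ]
  have hcr : a ≤ a + 1 / μ - r := by linarith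
  have hsplit : ∀ t, μ * exp (-μ * (t - a)) * min r (max 0 (a + 1 / μ - t))
      = μ * exp (-μ * (t - a)) * max 0 (a + 1 / μ - t)
        - μ * exp (-μ * (t - a)) * max 0 (a + 1 / μ - r - t) := fun t => by
    rw [min_max_zero_eq_sub hr0, sub_right_comm, mul_sub]
  simp_rw [hsplit]
  rw [integral_sub (integrableOn_Ioi_exp_mul_max_zero_sub a _)
      (integrableOn_Ioi_exp_mul_max_zero_sub a _),
    integral_Ioi_exp_mul_max_zero_sub a hμ.ne' hc, integral_Ioi_exp_mul_max_zero_sub a hμ.ne' hcr]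
  have hexp₁ : -μ * (a + 1 / μ - a) = -1 := by field_simp; ring
  have hexp₂ : -μ * (a + 1 / μ - r - a) = μ * r - 1 := by field_simp; ring
  rw [hexp₁, hexp₂]
  field_simp
  ring
end

section
/- For every a ≥ 0, every μ > 0, and every r with 0 ≤ r < 1/μ, 1 − (1/(a + 1/μ))·∫_{a}^{∞} μ·exp(−μ(t−a))·min(r, max(0, a + 1/μ − t)) dt = (1 + a·μ − μ·r − exp(−1) + exp(μ·r − 1))/(1 + a·μ). -/
/-!
Since `min r x⁺ = x⁺ - (x - r)⁺` for `r ≥ 0`, the expected under-utilization is the difference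
of the truncated means `E[(c - t)⁺]` at `c = a + 1/μ` and `c = a + 1/μ - r`. Each is an integral
of `μ e^{-μ(t-a)} (c - t)` over `[a, c]`, with antiderivative `e^{-μ(t-a)} (t - c + 1/μ)`.
-/

open MeasureTheory Real Set

theorem min_max_zero_eq_sub_s10 {r : ℝ} (hr : 0 ≤ r) (x : ℝ) :
    min r (max 0 x) = max 0 x - max 0 (x - r) := by
  rcases le_total x 0 with hx | hx
  · rw [max_eq_left hx, max_eq_left (by linarith), min_eq_right hr, sub_zero]
  rcases le_total x r with hxr | hxr
  · rw [max_eq_right hx, max_eq_left (by linarith), min_eq_right hxr, sub_zero]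
  · rw [max_eq_right hx, max_eq_right (by linarith), min_eq_left hxr]
    ring

section PositivePart

variable {g : ℝ → ℝ} {a c : ℝ}

theorem mul_max_zero_sub_eq_zero_of_mem_Ioi_sdiff_Ioc {t : ℝ} (ht : t ∈ Ioi a \ Ioc a c) :
    g t * max 0 (c - t) = 0 := by
  have hct : c < t := by
    by_contra! h
    exact ht.2 ⟨ht.1, h⟩
  rw [max_eq_left (by linarith), mul_zero]

theorem integrableOn_Ioi_mul_max_zero_sub (hg : Continuous g) (a c : ℝ) :
    IntegrableOn (fun t ↦ g t * max 0 (c - t)) (Ioi a) :=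
  (by fun_prop : Continuous fun t ↦ g t * max 0 (c - t)).integrableOn_Ioc.of_forall_sdiff_eq_zero
    measurableSet_Ioi fun _ ↦ mul_max_zero_sub_eq_zero_of_mem_Ioi_sdiff_Ioc

theorem setIntegral_Ioi_mul_max_zero_sub (hac : a ≤ c) :
    ∫ t in Ioi a, g t * max 0 (c - t) = ∫ t in a..c, g t * (c - t) := by
  rw [setIntegral_eq_of_subset_of_forall_sdiff_eq_zero measurableSet_Ioi Ioc_subset_Ioi_self
      fun _ ↦ mul_max_zero_sub_eq_zero_of_mem_Ioi_sdiff_Ioc,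
    intervalIntegral.integral_of_le hac]
  refine setIntegral_congr_fun measurableSet_Ioc fun t ht ↦ ?_
  rw [max_eq_right (by linarith [ht.2])]

end PositivePart

theorem integral_mul_exp_mul_sub {μ : ℝ} (hμ : μ ≠ 0) (a c : ℝ) :
    ∫ t in a..c, μ * exp (-μ * (t - a)) * (c - t) = c - a - (1 - exp (-μ * (c - a))) / μ := by
  have hderiv : ∀ t ∈ uIcc a c, HasDerivAt (fun t ↦ exp (-μ * (t - a)) * (t - c + 1 / μ))
      (μ * exp (-μ * (t - a)) * (c - t)) t := by
    intro t _
    have hexp : HasDerivAt (fun t ↦ exp (-μ * (t - a))) (exp (-μ * (t - a)) * (-μ * 1)) t :=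
      (((hasDerivAt_id' t).sub_const a).const_mul (-μ)).exp
    refine (hexp.mul (((hasDerivAt_id' t).sub_const c).add_const (1 / μ))).congr_deriv ?_
    field_simp
    ring
  rw [intervalIntegral.integral_eq_sub_of_hasDerivAt hderiv
    (Continuous.intervalIntegrable (by fun_prop) a c)]
  simp only [sub_self, mul_zero, exp_zero]
  field_simp
  ring

/-- First case of the worst-case efficiency formula (equation (19)) of the
paper: for shifted-exponential runtimes (shift `a ≥ 0`, rate `μ`) and
round-trip time `r < 1/μ`, the efficiency `1 − E[Tu]/E[β]` equals
`(1 + aμ − μr − e⁻¹ + e^{μr−1})/(1 + aμ)`. -/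
theorem efficiency_small_rtt
    (a : ℝ) (ha : 0 ≤ a) (μ : ℝ) (hμ : 0 < μ)
    (r : ℝ) (hr0 : 0 ≤ r) (hr : r < 1 / μ) :
    1 - (1 / (a + 1 / μ)) *
        ∫ t in Set.Ioi a,
          μ * Real.exp (-μ * (t - a)) * min r (max 0 (a + 1 / μ - t))
      = (1 + a * μ - μ * r - Real.exp (-1) + Real.exp (μ * r - 1)) / (1 + a * μ) := by
  have hg : Continuous fun t ↦ μ * exp (-μ * (t - a)) := by fun_prop
  have hsplit : ∀ t, μ * exp (-μ * (t - a)) * min r (max 0 (a + 1 / μ - t))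
      = μ * exp (-μ * (t - a)) * max 0 (a + 1 / μ - t)
        - μ * exp (-μ * (t - a)) * max 0 (a + 1 / μ - r - t) := fun t ↦ by
    rw [min_max_zero_eq_sub_s10 hr0, sub_right_comm, mul_sub]
  have hexp_top : exp (-μ * (a + 1 / μ - a)) = exp (-1) := by
    congr 1; field_simp; ring
  have hexp_mid : exp (-μ * (a + 1 / μ - r - a)) = exp (μ * r - 1) := by
    congr 1; field_simp; ring
  simp_rw [hsplit]
  rw [integral_sub (integrableOn_Ioi_mul_max_zero_sub hg _ _)
      (integrableOn_Ioi_mul_max_zero_sub hg _ _),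
    setIntegral_Ioi_mul_max_zero_sub (le_add_of_nonneg_right (by positivity)),
    setIntegral_Ioi_mul_max_zero_sub (by linarith),
    integral_mul_exp_mul_sub hμ.ne', integral_mul_exp_mul_sub hμ.ne', hexp_top, hexp_mid]
  field_simp
  ring
end

section
/- For every a ≥ 0, every μ > 0, and every r with r ≥ 1/μ, 1 − (1/(a + 1/μ))·∫_{a}^{∞} μ·exp(−μ(t−a))·min(r, max(0, a + 1/μ − t)) dt = (e·(1 + a·μ) − 1)/(e·(1 + a·μ)), where e = exp(1). -/
open MeasureTheory Real Set

/-! Since `r ≥ 1/μ` bounds the residual `(a + 1/μ - t)⁺` on `t > a`, the cap `min r` is inactive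
and the integral is the expected residual `E[(a + d - X)⁺]` of a shifted exponential `X`, for
`d = 1/μ`. Integrating by parts gives `d - (1 - e^{-μd})/μ`, which is `e⁻¹/μ` at `d = 1/μ`;
dividing by `E[β] = a + 1/μ` yields `1/(e(1 + aμ))`. -/

lemma hasDerivAt_shiftedExp_residual_antideriv {μ : ℝ} (hμ : μ ≠ 0) (a c t : ℝ) :
    HasDerivAt (fun t => (t - c) * exp (-μ * (t - a)) + exp (-μ * (t - a)) / μ)
      (μ * exp (-μ * (t - a)) * (c - t)) t := by
  have hexp : HasDerivAt (fun t => exp (-μ * (t - a))) (exp (-μ * (t - a)) * -μ) t := by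
    simpa using ((hasDerivAt_id t).sub_const a |>.const_mul (-μ)).exp
  refine ((((hasDerivAt_id' t).sub_const c).mul hexp).add (hexp.div_const μ)).congr_deriv ?_
  field_simp
  ring

lemma setIntegral_Ioi_shiftedExp_mul_residual {μ : ℝ} (hμ : μ ≠ 0) (a : ℝ) {d : ℝ}
    (hd : 0 ≤ d) :
    ∫ t in Ioi a, μ * exp (-μ * (t - a)) * max 0 (a + d - t)
      = d - (1 - exp (-μ * d)) / μ := by
  have hvanish : ∀ t ∈ Ioi a \ Ioc a (a + d), μ * exp (-μ * (t - a)) * max 0 (a + d - t) = 0 := by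
    rintro t ⟨hta, htc⟩
    have : a + d < t := not_le.1 fun h => htc ⟨hta, h⟩
    rw [max_eq_left (by linarith), mul_zero]
  rw [setIntegral_eq_of_subset_of_forall_sdiff_eq_zero measurableSet_Ioi Ioc_subset_Ioi_self
      hvanish,
    ← intervalIntegral.integral_of_le (by linarith)]
  have hresidual : ∀ t ∈ uIcc a (a + d),
      μ * exp (-μ * (t - a)) * max 0 (a + d - t) = μ * exp (-μ * (t - a)) * (a + d - t) := by
    intro t ht
    rw [uIcc_of_le (by linarith)] at ht
    rw [max_eq_right (by linarith [ht.2])]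
  rw [intervalIntegral.integral_congr hresidual,
    intervalIntegral.integral_eq_sub_of_hasDerivAt
      (fun t _ => hasDerivAt_shiftedExp_residual_antideriv hμ a (a + d) t)
      (Continuous.intervalIntegrable (by fun_prop) _ _)]
  simp only [sub_self, mul_zero, exp_zero, add_sub_cancel_left]
  ring

lemma min_max_residual_eq_of_le {a μ r t : ℝ} (hμ : 0 < μ) (hr : 1 / μ ≤ r) (ht : a < t) :
    min r (max 0 (a + 1 / μ - t)) = max 0 (a + 1 / μ - t) :=
  min_eq_right (max_le (le_trans (by positivity) hr) (by linarith))

/-- Second case of the worst-case efficiency formula (equation (19)) of the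
paper: for shifted-exponential runtimes (shift `a ≥ 0`, rate `μ`) and
round-trip time `r ≥ 1/μ`, the efficiency `1 − E[Tu]/E[β]` equals
`(e·(1 + aμ) − 1)/(e·(1 + aμ))`. -/
theorem efficiency_large_rtt
    (a : ℝ) (ha : 0 ≤ a) (μ : ℝ) (hμ : 0 < μ)
    (r : ℝ) (hr : 1 / μ ≤ r) :
    1 - (1 / (a + 1 / μ)) *
        ∫ t in Set.Ioi a,
          μ * Real.exp (-μ * (t - a)) * min r (max 0 (a + 1 / μ - t))
      = (Real.exp 1 * (1 + a * μ) - 1) / (Real.exp 1 * (1 + a * μ)) := by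
  have hTu : ∫ t in Ioi a, μ * exp (-μ * (t - a)) * min r (max 0 (a + 1 / μ - t))
      = exp (-1) / μ := by
    rw [setIntegral_congr_fun measurableSet_Ioi
        (fun t ht => by rw [min_max_residual_eq_of_le hμ hr ht]),
      setIntegral_Ioi_shiftedExp_mul_residual hμ.ne' a (by positivity : (0 : ℝ) ≤ 1 / μ),
      neg_mul, mul_one_div_cancel hμ.ne']
    ring
  rw [hTu, exp_neg]
  have : 0 < 1 + a * μ := by positivity
  field_simp
  ring
end

section
/- Let N ≥ 1, let E : Fin N → ℝ satisfy E n > 0 for every n, and let R > 0. Then R / (∑_{n} 1/(E n)) is the least element of the set {T ∈ ℝ : ∃ r : Fin N → ℝ, (∀ n, r n ≥ 0) ∧ ∑_{n} r n = R ∧ (∀ n, r n · E n ≤ T)}, and this least value is attained by the allocation r n = R / (E n · ∑_{m} 1/(E m)), for which r n · E n = R / ∑_{m} 1/(E m) for every n. -/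
/-- The static solution of the paper (equation (5)): `R / ∑_n 1/(E n)` is the
least achievable task completion delay over all nonnegative relaxed allocations
summing to `R`, and it is attained by `r n = R / (E n · ∑_m 1/(E m))`, an
allocation for which every per-helper delay `r n · E n` equals the optimum. -/
theorem static_solution_optimal
    (N : ℕ) (hN : 1 ≤ N)
    (E : Fin N → ℝ) (hE : ∀ n, 0 < E n)
    (R : ℝ) (hR : 0 < R) :
    IsLeast {T : ℝ | ∃ r : Fin N → ℝ,
        (∀ n, 0 ≤ r n) ∧ (∑ n, r n = R) ∧ (∀ n, r n * E n ≤ T)}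
      (R / (∑ n, 1 / E n))
    ∧ (∀ n : Fin N,
        0 ≤ R / (E n * ∑ m, 1 / E m))
    ∧ (∑ n : Fin N, R / (E n * ∑ m, 1 / E m)) = R
    ∧ (∀ n : Fin N,
        (R / (E n * ∑ m, 1 / E m)) * E n = R / (∑ m, 1 / E m)) := by
  have hS : 0 < ∑ m, 1 / E m := by
    haveI : Nonempty (Fin N) := Fin.pos_iff_nonempty.mp hN
    exact Finset.sum_pos (fun i _ => div_pos one_pos (hE i)) Finset.univ_nonempty
  have hSne : (∑ m, 1 / E m) ≠ 0 := ne_of_gt hS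
  have hnonneg : ∀ n : Fin N, 0 ≤ R / (E n * ∑ m, 1 / E m) := by
    intro n; exact div_nonneg hR.le (mul_nonneg (hE n).le hS.le)
  have hsum : (∑ n : Fin N, R / (E n * ∑ m, 1 / E m)) = R := by
    have : ∀ n : Fin N, R / (E n * ∑ m, 1 / E m)
        = (R / ∑ m, 1 / E m) * (1 / E n) := by
      intro n; field_simp
    rw [Finset.sum_congr rfl (fun n _ => this n), ← Finset.mul_sum]
    field_simp
  have heq : ∀ n : Fin N,
      (R / (E n * ∑ m, 1 / E m)) * E n = R / (∑ m, 1 / E m) := by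
    intro n
    have hEn := (hE n).ne'
    field_simp
  refine ⟨⟨⟨fun n => R / (E n * ∑ m, 1 / E m), hnonneg, hsum,
      fun n => le_of_eq (heq n)⟩, ?_⟩, hnonneg, hsum, heq⟩
  rintro T ⟨r, hr0, hrsum, hrT⟩
  rw [div_le_iff₀ hS]
  calc R = ∑ n, r n := hrsum.symm
    _ ≤ ∑ n, T * (1 / E n) := by
        apply Finset.sum_le_sum
        intro i _
        have := hrT i
        rw [mul_one_div, le_div_iff₀ (hE i)]
        linarith
    _ = T * ∑ n, 1 / E n := by rw [Finset.mul_sum]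
end

section
/- Let N ≥ 1, let RTT : Fin N → ℝ, β : Fin N → ℕ → ℝ, and Tu : Fin N → ℕ → ℝ with Tu n i ≥ 0 for all n, i, and let R ∈ ℕ. For an allocation r : Fin N → ℕ with ∑_{n} r n = R, define D(r) = max_{n} (RTT n + ∑_{i=0}^{r n − 1} (β n i + Tu n i)) and D'(r) = max_{n} (RTT n + ∑_{i=0}^{r n − 1} β n i). Suppose r^best minimizes D' among all allocations summing to R and r^C3P minimizes D among all allocations summing to R. Then D(r^C3P) − D'(r^best) ≤ max_{n} ∑_{i=0}^{r^best_n − 1} Tu n i. -/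
/-- The gap bound (equation (9)) of the paper comparing C3P to the non-ergodic
solution: if `rbest` minimizes the non-ergodic delay `D'` and `rc3p` minimizes
the C3P delay `D` (runtimes plus per-packet under-utilization times) among all
allocations of `R` packets, then `D(rc3p) - D'(rbest)` is at most the maximal
total under-utilization time under the allocation `rbest`. -/
theorem c3p_gap_bound
    (N : ℕ) (hN : 1 ≤ N)
    (RTT : Fin N → ℝ) (β : Fin N → ℕ → ℝ) (Tu : Fin N → ℕ → ℝ)
    (hTu : ∀ n i, 0 ≤ Tu n i)
    (R : ℕ)
    (D D' : (Fin N → ℕ) → ℝ)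
    (hD : ∀ r, D r = Finset.univ.sup'
      (Finset.univ_nonempty_iff.2 ⟨⟨0, hN⟩⟩)
      (fun n => RTT n + ∑ i ∈ Finset.range (r n), (β n i + Tu n i)))
    (hD' : ∀ r, D' r = Finset.univ.sup'
      (Finset.univ_nonempty_iff.2 ⟨⟨0, hN⟩⟩)
      (fun n => RTT n + ∑ i ∈ Finset.range (r n), β n i))
    (rbest rc3p : Fin N → ℕ)
    (hrbest_sum : ∑ n, rbest n = R)
    (hrc3p_sum : ∑ n, rc3p n = R)
    (hrbest_min : ∀ r : Fin N → ℕ, (∑ n, r n = R) → D' rbest ≤ D' r)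
    (hrc3p_min : ∀ r : Fin N → ℕ, (∑ n, r n = R) → D rc3p ≤ D r) :
    D rc3p - D' rbest ≤ Finset.univ.sup'
      (Finset.univ_nonempty_iff.2 ⟨⟨0, hN⟩⟩)
      (fun n => ∑ i ∈ Finset.range (rbest n), Tu n i) := by
  have h1 : D rc3p ≤ D rbest := hrc3p_min rbest hrbest_sum
  have h2 : D rbest ≤ D' rbest + Finset.univ.sup'
      (Finset.univ_nonempty_iff.2 ⟨⟨0, hN⟩⟩)
      (fun n => ∑ i ∈ Finset.range (rbest n), Tu n i) := by
    rw [hD, hD']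
    apply Finset.sup'_le
    intro n _
    rw [Finset.sum_add_distrib, ← add_assoc]
    gcongr
    · exact Finset.le_sup' (fun n => RTT n + ∑ i ∈ Finset.range (rbest n), β n i)
        (Finset.mem_univ n)
    · exact Finset.le_sup' (fun n => ∑ i ∈ Finset.range (rbest n), Tu n i)
        (Finset.mem_univ n)
  linarith
end
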